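/- arXiv:1201.1798 — 2 statements merged into one kernel-verified Lean document; each statement's English description precedes it below -/
import Mathlib

section
/- Let d ≥ 1, let p ≥ 2 be an integer, and let V_1, …, V_n (n ≥ 2) be nonzero proper linear subspaces of ℝ^d with positive weights ω_1, …, ω_n; set m := Σ_{j=1}^n ω_j·dim(V_j) and assume m²/d − Σ_{j=1}^n ω_j²·dim(V_j) ≥ 0. Then FFP({(V_j, ω_j)}_{j=1}^n, p) = (m²/d − Σ_{j=1}^n ω_j²·dim(V_j))^p / (Σ_{i≠j} ω_i ω_j)^{p−1} + Σ_{j=1}^n ω_j²·dim(V_j)^p holds if and only if {(V_j, ω_j)}_{j=1}^n is an equiangular tight fusion frame, i.e. ⟨P_{V_i}, P_{V_j}⟩ takes the same value for all i ≠ j and Σ_{j=1}^n ω_j P_{V_j} = (m/d)·Id. -/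
open scoped BigOperators

/-- The orthogonal projection onto a subspace `V` of `ℝ^d`, as a linear endomorphism. -/
noncomputable def proj {d : ℕ} (V : Submodule ℝ (EuclideanSpace ℝ (Fin d))) :
    EuclideanSpace ℝ (Fin d) →ₗ[ℝ] EuclideanSpace ℝ (Fin d) :=
  V.subtype ∘ₗ (V.orthogonalProjection).toLinearMap

/-- `⟨P_V, P_W⟩ = trace (P_V P_W)`. -/
noncomputable def trPP {d : ℕ} (V W : Submodule ℝ (EuclideanSpace ℝ (Fin d))) : ℝ :=
  LinearMap.trace ℝ _ (proj V ∘ₗ proj W)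

/-- The `p`-fusion frame potential. -/
noncomputable def FFP {d n : ℕ} (V : Fin n → Submodule ℝ (EuclideanSpace ℝ (Fin d)))
    (ω : Fin n → ℝ) (p : ℕ) : ℝ :=
  ∑ i, ∑ j, ω i * ω j * trPP (V i) (V j) ^ p

/-!
Let `T = ∑ ω_j P_{V_j}`, `D = ∑ ω_j² dim V_j` and `Q = ∑_{i≠j} ω_i ω_j ⟨P_{V_i}, P_{V_j}⟩`, so
that `tr T = m` and `tr T² = Q + D`. For a symmetric operator, `(tr T)² / d ≤ tr T²` with equality
iff `T` is scalar (look at `tr (T - (tr T / d) Id)² ≥ 0`); hence `m² / d - D ≤ Q`, with equality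
iff the fusion frame is tight. Jensen's inequality for the strictly convex `x ↦ x ^ p` with the
weights `ω_i ω_j` gives `Q ^ p / W ^ (p - 1) ≤ ∑_{i≠j} ω_i ω_j ⟨P_{V_i}, P_{V_j}⟩ ^ p`, where
`W = ∑_{i≠j} ω_i ω_j`, with equality iff the family is equiangular. The value in the theorem is
the bottom of this chain, so it is attained iff both inequalities are equalities.
-/

theorem pow_div_pow_sub_one_eq_mul_div_pow {x W : ℝ} {p : ℕ} (hW : W ≠ 0) (hp : p ≠ 0) :
    x ^ p / W ^ (p - 1) = W * (x / W) ^ p := by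
  obtain ⟨q, rfl⟩ := Nat.exists_eq_add_one_of_ne_zero hp
  rw [Nat.add_sub_cancel, div_pow, pow_succ, pow_succ]
  field_simp

theorem eq_pow_div_iff_of_le {S Q R c : ℝ} {p : ℕ} (hp : p ≠ 0) (hS : 0 ≤ S) (hSQ : S ≤ Q)
    (hc : 0 < c) (hQR : Q ^ p / c ≤ R) :
    R = S ^ p / c ↔ R = Q ^ p / c ∧ Q = S := by
  refine ⟨fun h ↦ ?_, fun ⟨h, hQS⟩ ↦ hQS ▸ h⟩
  have hQS : Q ^ p = S ^ p := le_antisymm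
    ((div_le_div_iff_of_pos_right hc).1 (h ▸ hQR)) (pow_le_pow_left₀ hS hSQ p)
  have hQS := (pow_left_inj₀ (hS.trans hSQ) hS hp).1 hQS
  exact ⟨hQS ▸ h, hQS⟩

namespace Finset

theorem sum_sum_eq_sum_offDiag_add_sum {ι M : Type*} [DecidableEq ι] [AddCommMonoid M]
    (s : Finset ι) (f : ι → ι → M) :
    ∑ i ∈ s, ∑ j ∈ s, f i j = ∑ ij ∈ s.offDiag, f ij.1 ij.2 + ∑ i ∈ s, f i i := by
  rw [← sum_product' s s f, ← diag_union_offDiag, sum_union (disjoint_diag_offDiag _), sum_diag,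
    add_comm]

variable {ι : Type*} {t : Finset ι} {w a : ι → ℝ} {p : ℕ}

theorem sum_div_sum_mul_eq_div (w f : ι → ℝ) (t : Finset ι) :
    ∑ i ∈ t, w i / (∑ j ∈ t, w j) * f i = (∑ i ∈ t, w i * f i) / ∑ j ∈ t, w j := by
  rw [sum_div]
  exact sum_congr rfl fun i _ ↦ by ring

theorem sum_div_sum_eq_one (hw : ∀ i ∈ t, 0 < w i) (ht : t.Nonempty) :
    ∑ i ∈ t, w i / ∑ j ∈ t, w j = 1 := by
  rw [← sum_div, div_self (sum_pos hw ht).ne']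

theorem pow_sum_mul_div_le_sum_mul_pow (hw : ∀ i ∈ t, 0 < w i) (ha : ∀ i ∈ t, 0 ≤ a i)
    (hp : p ≠ 0) :
    (∑ i ∈ t, w i * a i) ^ p / (∑ i ∈ t, w i) ^ (p - 1) ≤ ∑ i ∈ t, w i * a i ^ p := by
  rcases t.eq_empty_or_nonempty with rfl | ht
  · simp [hp]
  have hW : 0 < ∑ i ∈ t, w i := sum_pos hw ht
  have hJensen := Real.pow_arith_mean_le_arith_mean_pow t (fun i ↦ w i / ∑ j ∈ t, w j) a
    (fun i hi ↦ (div_pos (hw i hi) hW).le) (sum_div_sum_eq_one hw ht) ha p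
  simp only [sum_div_sum_mul_eq_div] at hJensen
  calc (∑ i ∈ t, w i * a i) ^ p / (∑ i ∈ t, w i) ^ (p - 1)
      = (∑ i ∈ t, w i) * ((∑ i ∈ t, w i * a i) / ∑ i ∈ t, w i) ^ p :=
        pow_div_pow_sub_one_eq_mul_div_pow hW.ne' hp
    _ ≤ (∑ i ∈ t, w i) * ((∑ i ∈ t, w i * a i ^ p) / ∑ i ∈ t, w i) := by gcongr
    _ = ∑ i ∈ t, w i * a i ^ p := mul_div_cancel₀ _ hW.ne'

theorem sum_mul_pow_eq_pow_sum_mul_div_iff (hw : ∀ i ∈ t, 0 < w i) (ha : ∀ i ∈ t, 0 ≤ a i)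
    (hp : 2 ≤ p) :
    ∑ i ∈ t, w i * a i ^ p = (∑ i ∈ t, w i * a i) ^ p / (∑ i ∈ t, w i) ^ (p - 1) ↔
      ∃ c, ∀ i ∈ t, a i = c := by
  rcases t.eq_empty_or_nonempty with rfl | ⟨i₀, hi₀⟩
  · simp [show p ≠ 0 by omega]
  have hW : 0 < ∑ i ∈ t, w i := sum_pos hw ⟨i₀, hi₀⟩
  have hJensen := (strictConvexOn_pow hp).map_sum_eq_iff_of_pos
    (fun i hi ↦ div_pos (hw i hi) hW) (sum_div_sum_eq_one hw ⟨i₀, hi₀⟩) ha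
  simp only [smul_eq_mul, sum_div_sum_mul_eq_div] at hJensen
  rw [pow_div_pow_sub_one_eq_mul_div_pow hW.ne' (by omega), mul_comm (∑ i ∈ t, w i),
    ← div_eq_iff hW.ne', eq_comm, hJensen]
  exact ⟨fun h ↦ ⟨a i₀, fun i hi ↦ h hi hi₀⟩,
    fun ⟨c, hc⟩ j hj k hk ↦ (hc j hj).trans (hc k hk).symm⟩

end Finset

namespace LinearMap

section RCLike

variable {𝕜 E : Type*} [RCLike 𝕜] [NormedAddCommGroup E] [InnerProductSpace 𝕜 E]

theorem IsSymmetric.comp_self_eq_zero_iff {T : E →ₗ[𝕜] E} (hT : T.IsSymmetric) :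
    T ∘ₗ T = 0 ↔ T = 0 := by
  refine ⟨fun h ↦ ext fun x ↦ ?_, fun h ↦ by simp [h]⟩
  rw [zero_apply, ← inner_self_eq_zero (𝕜 := 𝕜), ← hT, ← comp_apply, h, zero_apply,
    inner_zero_left]

variable [FiniteDimensional 𝕜 E]

theorem IsPositive.trace_eq_zero_iff {f : E →ₗ[𝕜] E} (hf : f.IsPositive) :
    trace 𝕜 E f = 0 ↔ f = 0 := by
  let b := stdOrthonormalBasis 𝕜 E
  rw [trace_eq_matrix_trace 𝕜 b.toBasis, ((posSemidef_toMatrix_iff b).mpr hf).trace_eq_zero_iff,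
    LinearEquiv.map_eq_zero_iff]

theorem IsSymmetric.isPositive_comp_self {T : E →ₗ[𝕜] E} (hT : T.IsSymmetric) :
    (T ∘ₗ T).IsPositive := by
  simpa only [hT.adjoint_eq] using isPositive_adjoint_comp_self T

end RCLike

variable {E : Type*} [NormedAddCommGroup E] [InnerProductSpace ℝ E] [FiniteDimensional ℝ E]

theorem trace_sub_smul_id_comp_self (T : E →ₗ[ℝ] E) (c : ℝ) :
    trace ℝ E ((T - c • id) ∘ₗ (T - c • id)) =
      trace ℝ E (T ∘ₗ T) - 2 * c * trace ℝ E T + c ^ 2 * Module.finrank ℝ E := by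
  simp only [sub_comp, comp_sub, smul_comp, comp_smul, id_comp, comp_id, map_sub, map_smul,
    trace_id, smul_eq_mul]
  ring

theorem sq_trace_div_finrank_add_trace_comp_self (T : E →ₗ[ℝ] E) :
    trace ℝ E T ^ 2 / Module.finrank ℝ E +
      trace ℝ E ((T - (trace ℝ E T / Module.finrank ℝ E) • id) ∘ₗ
        (T - (trace ℝ E T / Module.finrank ℝ E) • id)) = trace ℝ E (T ∘ₗ T) := by
  rw [trace_sub_smul_id_comp_self]
  rcases eq_or_ne (Module.finrank ℝ E : ℝ) 0 with hd | hd
  · simp [hd]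
  · field_simp
    ring

variable {T : E →ₗ[ℝ] E}

theorem IsSymmetric.sq_trace_div_finrank_le (hT : T.IsSymmetric) :
    trace ℝ E T ^ 2 / Module.finrank ℝ E ≤ trace ℝ E (T ∘ₗ T) := by
  rw [← sq_trace_div_finrank_add_trace_comp_self]
  exact le_add_of_nonneg_right
    (hT.sub (IsSymmetric.id.smul (conj_trivial _))).isPositive_comp_self.trace_nonneg

theorem IsSymmetric.trace_comp_self_eq_iff (hT : T.IsSymmetric) :
    trace ℝ E (T ∘ₗ T) = trace ℝ E T ^ 2 / Module.finrank ℝ E ↔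
      T = (trace ℝ E T / Module.finrank ℝ E) • id := by
  have hN := hT.sub (IsSymmetric.id.smul (conj_trivial (trace ℝ E T / Module.finrank ℝ E)))
  rw [← sq_trace_div_finrank_add_trace_comp_self, add_eq_left,
    hN.isPositive_comp_self.trace_eq_zero_iff, hN.comp_self_eq_zero_iff, sub_eq_zero]

end LinearMap

section Projection

variable {d : ℕ}

theorem isSymmetricProjection_proj (V : Submodule ℝ (EuclideanSpace ℝ (Fin d))) :
    (proj V).IsSymmetricProjection :=
  V.isSymmetricProjection_starProjection

theorem trace_proj (V : Submodule ℝ (EuclideanSpace ℝ (Fin d))) :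
    LinearMap.trace ℝ _ (proj V) = Module.finrank ℝ V := by
  have := (LinearMap.IsIdempotentElem.isProj_range _
    (isSymmetricProjection_proj V).isIdempotentElem).trace
  rwa [show LinearMap.range (proj V) = V from V.range_starProjection] at this

theorem trPP_self (V : Submodule ℝ (EuclideanSpace ℝ (Fin d))) :
    trPP V V = Module.finrank ℝ V := by
  rw [trPP, ← Module.End.mul_eq_comp, (isSymmetricProjection_proj V).isIdempotentElem.eq,
    trace_proj]

theorem trPP_nonneg (V W : Submodule ℝ (EuclideanSpace ℝ (Fin d))) : 0 ≤ trPP V W := by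
  have hV := isSymmetricProjection_proj V
  have hconj := (isSymmetricProjection_proj W).isPositive.conj_adjoint (proj V)
  rw [hV.isSymmetric.adjoint_eq] at hconj
  calc 0 ≤ LinearMap.trace ℝ _ (proj V * (proj W * proj V)) := hconj.trace_nonneg
    _ = LinearMap.trace ℝ _ (proj W * (proj V * proj V)) := by
      rw [LinearMap.trace_mul_comm, mul_assoc]
    _ = trPP V W := by rw [hV.isIdempotentElem.eq, LinearMap.trace_mul_comm]; rfl

end Projection

section FusionFrame

variable {d n : ℕ} (V : Fin n → Submodule ℝ (EuclideanSpace ℝ (Fin d))) (ω : Fin n → ℝ)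

theorem FFP_eq_sum_offDiag_add (p : ℕ) :
    FFP V ω p = ∑ ij ∈ Finset.univ.offDiag, ω ij.1 * ω ij.2 * trPP (V ij.1) (V ij.2) ^ p +
      ∑ j, ω j ^ 2 * (Module.finrank ℝ (V j) : ℝ) ^ p := by
  rw [FFP, Finset.sum_sum_eq_sum_offDiag_add_sum]
  simp only [trPP_self, sq]

theorem isSymmetric_sum_smul_proj : (∑ j, ω j • proj (V j)).IsSymmetric :=
  LinearMap.isSymmetric_sum _ fun j _ ↦
    (isSymmetricProjection_proj (V j)).isSymmetric.smul (conj_trivial _)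

theorem trace_sum_smul_proj :
    LinearMap.trace ℝ _ (∑ j, ω j • proj (V j)) = ∑ j, ω j * Module.finrank ℝ (V j) := by
  simp only [map_sum, map_smul, trace_proj, smul_eq_mul]

theorem trace_sum_smul_proj_comp_self :
    LinearMap.trace ℝ _ ((∑ j, ω j • proj (V j)) ∘ₗ ∑ j, ω j • proj (V j)) =
      ∑ ij ∈ Finset.univ.offDiag, ω ij.1 * ω ij.2 * trPP (V ij.1) (V ij.2) +
        ∑ j, ω j ^ 2 * (Module.finrank ℝ (V j) : ℝ) := by
  have hFFP : LinearMap.trace ℝ _ ((∑ j, ω j • proj (V j)) ∘ₗ ∑ j, ω j • proj (V j)) =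
      FFP V ω 1 := by
    simp only [← Module.End.mul_eq_comp, Finset.sum_mul_sum, smul_mul_smul, map_sum, map_smul,
      FFP, pow_one, smul_eq_mul]
    rfl
  simpa only [pow_one] using hFFP.trans (FFP_eq_sum_offDiag_add V ω 1)

theorem sq_div_sub_le_sum_offDiag :
    (∑ j, ω j * (Module.finrank ℝ (V j) : ℝ)) ^ 2 / d -
        ∑ j, ω j ^ 2 * (Module.finrank ℝ (V j) : ℝ) ≤
      ∑ ij ∈ Finset.univ.offDiag, ω ij.1 * ω ij.2 * trPP (V ij.1) (V ij.2) := by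
  have := (isSymmetric_sum_smul_proj V ω).sq_trace_div_finrank_le
  rw [trace_sum_smul_proj, trace_sum_smul_proj_comp_self, finrank_euclideanSpace_fin] at this
  linarith

theorem sum_smul_proj_eq_smul_id_iff :
    ∑ j, ω j • proj (V j) = ((∑ j, ω j * (Module.finrank ℝ (V j) : ℝ)) / d) • LinearMap.id ↔
      ∑ ij ∈ Finset.univ.offDiag, ω ij.1 * ω ij.2 * trPP (V ij.1) (V ij.2) =
        (∑ j, ω j * (Module.finrank ℝ (V j) : ℝ)) ^ 2 / d -
          ∑ j, ω j ^ 2 * (Module.finrank ℝ (V j) : ℝ) := by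
  have := (isSymmetric_sum_smul_proj V ω).trace_comp_self_eq_iff
  rw [trace_sum_smul_proj, trace_sum_smul_proj_comp_self, finrank_euclideanSpace_fin] at this
  rw [← this, eq_sub_iff_add_eq]

end FusionFrame

theorem stmt2_general {d n : ℕ} (hn : 2 ≤ n) (p : ℕ) (hp : 2 ≤ p)
    (V : Fin n → Submodule ℝ (EuclideanSpace ℝ (Fin d)))
    (ω : Fin n → ℝ) (hω : ∀ j, 0 < ω j)
    (m : ℝ) (hm : m = ∑ j, ω j * (Module.finrank ℝ (V j) : ℝ))
    (hpos : 0 ≤ m ^ 2 / d - ∑ j, ω j ^ 2 * (Module.finrank ℝ (V j) : ℝ)) :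
    FFP V ω p =
      (m ^ 2 / d - ∑ j, ω j ^ 2 * (Module.finrank ℝ (V j) : ℝ)) ^ p /
        (∑ ij ∈ Finset.univ.offDiag (α := Fin n), ω ij.1 * ω ij.2) ^ (p - 1) +
      ∑ j, ω j ^ 2 * (Module.finrank ℝ (V j) : ℝ) ^ p
    ↔
    ((∃ c : ℝ, ∀ i j, i ≠ j → trPP (V i) (V j) = c) ∧
      ∑ j, ω j • proj (V j) =
        (m / d) • (LinearMap.id : EuclideanSpace ℝ (Fin d) →ₗ[ℝ] EuclideanSpace ℝ (Fin d))) := by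
  subst hm
  have hweights : ∀ ij ∈ Finset.univ.offDiag (α := Fin n), 0 < ω ij.1 * ω ij.2 :=
    fun ij _ ↦ mul_pos (hω _) (hω _)
  have hangles : ∀ ij ∈ Finset.univ.offDiag (α := Fin n), 0 ≤ trPP (V ij.1) (V ij.2) :=
    fun ij _ ↦ trPP_nonneg _ _
  obtain ⟨i, j, hij⟩ := (Fin.nontrivial_iff_two_le.2 hn).exists_pair_ne
  have hW : 0 < ∑ ij ∈ Finset.univ.offDiag (α := Fin n), ω ij.1 * ω ij.2 :=
    Finset.sum_pos hweights ⟨(i, j), by simp [hij]⟩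
  rw [FFP_eq_sum_offDiag_add, add_left_inj, eq_pow_div_iff_of_le (by omega) hpos
    (sq_div_sub_le_sum_offDiag V ω) (pow_pos hW _)
    (Finset.pow_sum_mul_div_le_sum_mul_pow hweights hangles (by omega)),
    Finset.sum_mul_pow_eq_pow_sum_mul_div_iff hweights hangles hp, sum_smul_proj_eq_smul_id_iff]
  simp only [Finset.mem_offDiag, Finset.mem_univ, true_and, Prod.forall]

theorem stmt2 {d n : ℕ} (hd : 1 ≤ d) (hn : 2 ≤ n) (p : ℕ) (hp : 2 ≤ p)
    (V : Fin n → Submodule ℝ (EuclideanSpace ℝ (Fin d)))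
    (hVbot : ∀ j, V j ≠ ⊥) (hVtop : ∀ j, V j ≠ ⊤)
    (ω : Fin n → ℝ) (hω : ∀ j, 0 < ω j)
    (m : ℝ) (hm : m = ∑ j, ω j * (Module.finrank ℝ (V j) : ℝ))
    (hpos : 0 ≤ m ^ 2 / d - ∑ j, ω j ^ 2 * (Module.finrank ℝ (V j) : ℝ)) :
    FFP V ω p =
      (m ^ 2 / d - ∑ j, ω j ^ 2 * (Module.finrank ℝ (V j) : ℝ)) ^ p /
        (∑ ij ∈ Finset.univ.offDiag (α := Fin n), ω ij.1 * ω ij.2) ^ (p - 1) +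
      ∑ j, ω j ^ 2 * (Module.finrank ℝ (V j) : ℝ) ^ p
    ↔
    ((∃ c : ℝ, ∀ i j, i ≠ j → trPP (V i) (V j) = c) ∧
      ∑ j, ω j • proj (V j) =
        (m / d) • (LinearMap.id : EuclideanSpace ℝ (Fin d) →ₗ[ℝ] EuclideanSpace ℝ (Fin d))) :=
  stmt2_general hn p hp V ω hω m hm hpos
end

section
/- Let p ≥ 2 be an integer and let {(V_j, ω_j)}_{j=1}^n be a tight p-fusion frame in ℝ^d with bound A, i.e. Σ_{j=1}^n ω_j ‖P_{V_j}(x)‖^{2p} = A ‖x‖^{2p} for all x ∈ ℝ^d. Then {(V_j, ω̃_j)}_{j=1}^n with ω̃_j := ω_j·(p−1+dim(V_j)/2) is a tight (p−1)-fusion frame; more precisely, Σ_{j=1}^n ω_j (p−1+dim(V_j)/2) ‖P_{V_j}(x)‖^{2(p−1)} = A(p−1+d/2) ‖x‖^{2(p−1)} for all x ∈ ℝ^d. -/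
/-!
Along the line `y = x + t v`, the function `‖P_K y‖ ^ (2p)` is the `p`-th power of a
quadratic polynomial in `t`, so the tight-frame identity is an identity of polynomials in `t` and
may be differentiated twice at `t = 0`. Summing these second derivatives over an orthonormal basis
`v = bᵢ` computes the Laplacian, `Δ ‖P_K x‖ ^ (2p) = 4p (p - 1 + dim K / 2) ‖P_K x‖ ^ (2p - 2)`:
here `∑ᵢ ⟪P_K x, P_K bᵢ⟫² = ‖P_K x‖²` and `∑ᵢ ‖P_K bᵢ‖² = tr P_K = dim K`. Applying it to both
sides (with `K = ⊤` on the right) and dividing by `4p` gives the result.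
-/

open scoped BigOperators

open Polynomial Module
open scoped RealInnerProductSpace

theorem eval_zero_derivative_derivative_quadratic_pow {R : Type*} [CommRing R] (a b c : R)
    (p : ℕ) :
    (derivative (derivative ((C a + C b * X + C c * X ^ 2) ^ p))).eval 0
      = p * (p - 1) * a ^ (p - 2) * b ^ 2 + 2 * p * c * a ^ (p - 1) := by
  rcases p with _ | p
  · simp
  · simp only [derivative_pow, derivative_mul, derivative_add, derivative_C, derivative_X]
    simp only [eval_add, eval_mul, eval_pow, eval_C, eval_X, eval_natCast, eval_one, eval_zero,
      map_natCast, derivative_zero, derivative_one, Nat.add_one_sub_one]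
    push_cast
    ring

section

variable {E : Type*} [NormedAddCommGroup E] [InnerProductSpace ℝ E]

noncomputable def normSqPoly (u v : E) : ℝ[X] :=
  C (‖u‖ ^ 2) + C (2 * ⟪u, v⟫) * X + C (‖v‖ ^ 2) * X ^ 2

theorem eval_normSqPoly (u v : E) (t : ℝ) : (normSqPoly u v).eval t = ‖u + t • v‖ ^ 2 := by
  rw [normSqPoly, norm_add_sq_real, real_inner_smul_right, norm_smul, mul_pow,
    Real.norm_eq_abs, sq_abs]
  simp only [eval_add, eval_mul, eval_pow, eval_C, eval_X]
  ring

/-- The second derivative at `t = 0` of `t ↦ ‖K.starProjection (x + t • v)‖ ^ (2 * p)`. -/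
noncomputable def normPowSecondDeriv (K : Submodule ℝ E) [K.HasOrthogonalProjection] (p : ℕ)
    (x v : E) : ℝ :=
  (derivative (derivative (normSqPoly (K.starProjection x) (K.starProjection v) ^ p))).eval 0

theorem normPowSecondDeriv_eq (K : Submodule ℝ E) [K.HasOrthogonalProjection] (p : ℕ)
    (x v : E) :
    normPowSecondDeriv K p x v
      = p * (p - 1) * (‖K.starProjection x‖ ^ 2) ^ (p - 2)
          * (2 * ⟪K.starProjection x, K.starProjection v⟫) ^ 2
        + 2 * p * ‖K.starProjection v‖ ^ 2 * (‖K.starProjection x‖ ^ 2) ^ (p - 1) :=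
  eval_zero_derivative_derivative_quadratic_pow _ _ _ p

theorem inner_starProjection_starProjection (K : Submodule ℝ E) [K.HasOrthogonalProjection]
    (x y : E) : ⟪K.starProjection x, K.starProjection y⟫ = ⟪K.starProjection x, y⟫ := by
  rw [← K.inner_starProjection_left_eq_right,
    K.starProjection_eq_self_iff.mpr (K.starProjection_apply_mem x)]

theorem sum_inner_starProjection_sq {ι : Type*} [Fintype ι] (K : Submodule ℝ E)
    [K.HasOrthogonalProjection] (b : OrthonormalBasis ι ℝ E) (x : E) :
    ∑ i, ⟪K.starProjection x, K.starProjection (b i)⟫ ^ 2 = ‖K.starProjection x‖ ^ 2 := by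
  simp_rw [inner_starProjection_starProjection, b.sum_sq_inner_left]

theorem sum_norm_starProjection_sq {ι : Type*} [Fintype ι] [FiniteDimensional ℝ E]
    (K : Submodule ℝ E) (b : OrthonormalBasis ι ℝ E) :
    ∑ i, ‖K.starProjection (b i)‖ ^ 2 = finrank ℝ K := by
  have htrace := (LinearMap.IsIdempotentElem.isProj_range _
    (ContinuousLinearMap.IsIdempotentElem.toLinearMap K.isIdempotentElem_starProjection)).trace
  rw [K.range_starProjection, LinearMap.trace_eq_sum_inner _ b] at htrace
  rw [← htrace]
  refine Finset.sum_congr rfl fun i _ ↦ ?_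
  rw [← real_inner_self_eq_norm_sq, inner_starProjection_starProjection, real_inner_comm]
  rfl

theorem sum_normPowSecondDeriv [FiniteDimensional ℝ E] {ι : Type*} [Fintype ι]
    (K : Submodule ℝ E) (b : OrthonormalBasis ι ℝ E) (x : E) {p : ℕ} (hp : 1 ≤ p) :
    ∑ i, normPowSecondDeriv K p x (b i)
      = 4 * p * (p - 1 + finrank ℝ K / 2) * ‖K.starProjection x‖ ^ (2 * (p - 1)) := by
  set a := ‖K.starProjection x‖ ^ 2
  have hb : ∑ i, (2 * ⟪K.starProjection x, K.starProjection (b i)⟫) ^ 2 = 4 * a := by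
    simp_rw [mul_pow, ← Finset.mul_sum, sum_inner_starProjection_sq]
    norm_num [a]
  have hpow : (p - 1 : ℝ) * a ^ (p - 2) * a = (p - 1) * a ^ (p - 1) := by
    obtain _ | _ | p := p
    · omega
    · simp
    · simp [pow_succ, mul_assoc]
  calc _ = p * (p - 1) * a ^ (p - 2) * ∑ i, (2 * ⟪K.starProjection x, K.starProjection (b i)⟫) ^ 2
        + 2 * p * (∑ i, ‖K.starProjection (b i)‖ ^ 2) * a ^ (p - 1) := by
        simp_rw [normPowSecondDeriv_eq, Finset.sum_add_distrib, Finset.mul_sum, Finset.sum_mul, a]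
    _ = 4 * p * ((p - 1) * a ^ (p - 2) * a) + 2 * p * finrank ℝ K * a ^ (p - 1) := by
        rw [hb, sum_norm_starProjection_sq]; ring
    _ = _ := by rw [hpow, pow_mul]; ring

def IsTightFusionFrame {ι : Type*} [Fintype ι] (p : ℕ) (K : ι → Submodule ℝ E)
    [∀ j, (K j).HasOrthogonalProjection] (ω : ι → ℝ) (A : ℝ) : Prop :=
  ∀ x : E, ∑ j, ω j * ‖(K j).starProjection x‖ ^ (2 * p) = A * ‖x‖ ^ (2 * p)

namespace IsTightFusionFrame

variable {ι : Type*} [Fintype ι] {p : ℕ} {K : ι → Submodule ℝ E}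
  [∀ j, (K j).HasOrthogonalProjection] {ω : ι → ℝ} {A : ℝ}

theorem sum_mul_normPowSecondDeriv (h : IsTightFusionFrame p K ω A) (x v : E) :
    ∑ j, ω j * normPowSecondDeriv (K j) p x v = A * normPowSecondDeriv ⊤ p x v := by
  have hpoly : ∑ j, C (ω j) * normSqPoly ((K j).starProjection x) ((K j).starProjection v) ^ p
      = C A * normSqPoly ((⊤ : Submodule ℝ E).starProjection x)
        ((⊤ : Submodule ℝ E).starProjection v) ^ p := by
    refine Polynomial.funext fun t ↦ ?_
    simpa [eval_finsetSum, eval_normSqPoly, ← pow_mul, Submodule.starProjection_top]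
      using h (x + t • v)
  simpa [normPowSecondDeriv, eval_finsetSum, derivative_C_mul] using
    congrArg (fun P ↦ (derivative (derivative P)).eval 0) hpoly

theorem pred [FiniteDimensional ℝ E] (h : IsTightFusionFrame p K ω A) (hp : 1 ≤ p) :
    IsTightFusionFrame (p - 1) K (fun j ↦ ω j * (p - 1 + finrank ℝ (K j) / 2))
      (A * (p - 1 + finrank ℝ E / 2)) := by
  intro x
  let b := stdOrthonormalBasis ℝ E
  have h4p : (4 * p : ℝ) ≠ 0 := by positivity
  refine mul_left_cancel₀ h4p ?_
  calc 4 * p * ∑ j, ω j * (p - 1 + finrank ℝ (K j) / 2) * ‖(K j).starProjection x‖ ^ (2 * (p - 1))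
      = ∑ j, ω j * ∑ i, normPowSecondDeriv (K j) p x (b i) := by
        simp_rw [sum_normPowSecondDeriv _ _ _ hp, Finset.mul_sum]
        ring_nf
    _ = ∑ i, ∑ j, ω j * normPowSecondDeriv (K j) p x (b i) := by
        simp_rw [Finset.mul_sum]
        exact Finset.sum_comm
    _ = A * ∑ i, normPowSecondDeriv ⊤ p x (b i) := by
        simp_rw [h.sum_mul_normPowSecondDeriv, Finset.mul_sum]
    _ = 4 * p * (A * (p - 1 + finrank ℝ E / 2) * ‖x‖ ^ (2 * (p - 1))) := by
        rw [sum_normPowSecondDeriv _ _ _ hp, finrank_top, Submodule.starProjection_top,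
          ContinuousLinearMap.id_apply]
        ring

end IsTightFusionFrame

end

theorem stmt9_general {d n : ℕ} (p : ℕ) (hp : 2 ≤ p)
    (V : Fin n → Submodule ℝ (EuclideanSpace ℝ (Fin d)))
    (ω : Fin n → ℝ)
    (A : ℝ)
    (h : ∀ x : EuclideanSpace ℝ (Fin d),
      ∑ j, ω j * ‖proj (V j) x‖ ^ (2 * p) = A * ‖x‖ ^ (2 * p)) :
    ∀ x : EuclideanSpace ℝ (Fin d),
      ∑ j, ω j * ((p : ℝ) - 1 + (Module.finrank ℝ (V j) : ℝ) / 2) *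
          ‖proj (V j) x‖ ^ (2 * (p - 1))
        = A * ((p : ℝ) - 1 + (d : ℝ) / 2) * ‖x‖ ^ (2 * (p - 1)) := by
  have hV := IsTightFusionFrame.pred (K := V) h (by omega)
  rwa [finrank_euclideanSpace_fin] at hV

theorem stmt9 {d n : ℕ} (p : ℕ) (hp : 2 ≤ p)
    (V : Fin n → Submodule ℝ (EuclideanSpace ℝ (Fin d)))
    (hVbot : ∀ j, V j ≠ ⊥) (hVtop : ∀ j, V j ≠ ⊤)
    (ω : Fin n → ℝ) (hω : ∀ j, 0 < ω j)
    (A : ℝ) (hA : 0 < A)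
    (h : ∀ x : EuclideanSpace ℝ (Fin d),
      ∑ j, ω j * ‖proj (V j) x‖ ^ (2 * p) = A * ‖x‖ ^ (2 * p)) :
    ∀ x : EuclideanSpace ℝ (Fin d),
      ∑ j, ω j * ((p : ℝ) - 1 + (Module.finrank ℝ (V j) : ℝ) / 2) *
          ‖proj (V j) x‖ ^ (2 * (p - 1))
        = A * ((p : ℝ) - 1 + (d : ℝ) / 2) * ‖x‖ ^ (2 * (p - 1)) :=
  stmt9_general p hp V ω A h
end
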